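/- Let H be a finite set, and s : X^n × H → ℝ a score function of sensitivity at most Δ (i.e., |s(X,h) − s(X',h)| ≤ Δ for all h and all neighboring X, X'). The exponential mechanism, which outputs h with probability proportional to exp(ε·s(X,h)/(2Δ)), is (ε, 0)-differentially private. -/

import Mathlib

/-!
If two score vectors `u, v` differ by at most `δ` in every coordinate, each weight `exp (u h)`
is within a factor `exp δ` of `exp (v h)`, in both directions. So the numerator of a normalised
weight grows by at most `exp δ` and the normalising constant shrinks by at most `exp δ`, giving
a factor `exp (2δ)` overall. For the exponential mechanism the scores are `ε s / (2Δ)`, which by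
the sensitivity bound move by at most `ε / 2` between neighbouring datasets.
-/

open scoped Classical

/-- Output probability of the exponential mechanism with score s, sensitivity
parameter Δ and privacy parameter ε, on dataset X, at object h. -/
noncomputable def expMechProb {𝒳 H : Type*} [Fintype H] {n : ℕ}
    (s : (Fin n → 𝒳) → H → ℝ) (Δ ε : ℝ) (X : Fin n → 𝒳) (h : H) : ℝ :=
  Real.exp (ε * s X h / (2 * Δ)) / ∑ h' : H, Real.exp (ε * s X h' / (2 * Δ))

open Real Finset

theorem Real.exp_le_exp_mul_exp_of_sub_le {x y δ : ℝ} (h : x - y ≤ δ) :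
    exp x ≤ exp δ * exp y := by
  rw [← exp_add]
  exact exp_le_exp.mpr (by linarith)

theorem Real.exp_div_sum_exp_le {H : Type*} [Fintype H] {u v : H → ℝ} {δ : ℝ}
    (huv : ∀ g, |u g - v g| ≤ δ) (h : H) :
    exp (u h) / ∑ g, exp (u g) ≤ exp (2 * δ) * (exp (v h) / ∑ g, exp (v g)) := by
  have hpos : ∀ w : H → ℝ, 0 < ∑ g, exp (w g) := fun w =>
    sum_pos (fun g _ => exp_pos _) ⟨h, mem_univ h⟩
  have numerator : exp (u h) ≤ exp δ * exp (v h) :=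
    exp_le_exp_mul_exp_of_sub_le (abs_sub_le_iff.mp (huv h)).1
  have normalizer : ∑ g, exp (v g) ≤ exp δ * ∑ g, exp (u g) := by
    rw [mul_sum]
    exact sum_le_sum fun g _ => exp_le_exp_mul_exp_of_sub_le (abs_sub_le_iff.mp (huv g)).2
  rw [mul_div_assoc', div_le_div_iff₀ (hpos u) (hpos v)]
  calc exp (u h) * ∑ g, exp (v g)
      ≤ (exp δ * exp (v h)) * (exp δ * ∑ g, exp (u g)) :=
        mul_le_mul numerator normalizer (hpos v).le (by positivity)
    _ = exp (2 * δ) * exp (v h) * ∑ g, exp (u g) := by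
        rw [two_mul, exp_add]
        ring

theorem exponential_mechanism_is_DP_general
    {𝒳 H : Type*} [Fintype H] (n : ℕ)
    (s : (Fin n → 𝒳) → H → ℝ) (Δ ε : ℝ) (hΔ : 0 < Δ) (hε : 0 ≤ ε)
    (hsens : ∀ (h : H) (X X' : Fin n → 𝒳),
      (Finset.univ.filter fun i => X i ≠ X' i).card ≤ 1 →
      |s X h - s X' h| ≤ Δ) :
    ∀ X X' : Fin n → 𝒳,
      (Finset.univ.filter fun i => X i ≠ X' i).card ≤ 1 →
      ∀ S : Finset H,
        ∑ h ∈ S, expMechProb s Δ ε X h ≤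
          Real.exp ε * ∑ h ∈ S, expMechProb s Δ ε X' h := by
  intro X X' hneighbour S
  have scaled_sensitivity : ∀ g,
      |ε * s X g / (2 * Δ) - ε * s X' g / (2 * Δ)| ≤ ε / 2 := fun g => by
    have h2Δ : (0 : ℝ) < 2 * Δ := by positivity
    rw [← sub_div, ← mul_sub, abs_div, abs_mul, abs_of_nonneg hε, abs_of_pos h2Δ,
      div_le_div_iff₀ h2Δ two_pos]
    linarith [mul_le_mul_of_nonneg_left (hsens g X X' hneighbour) hε]
  rw [mul_sum]
  refine sum_le_sum fun h _ => ?_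
  simpa only [expMechProb, mul_div_cancel₀ ε two_ne_zero] using
    exp_div_sum_exp_le scaled_sensitivity h

/-- the exponential mechanism is (ε, 0)-differentially private. -/
theorem exponential_mechanism_is_DP
    {𝒳 H : Type*} [Fintype H] [Nonempty H] (n : ℕ)
    (s : (Fin n → 𝒳) → H → ℝ) (Δ ε : ℝ) (hΔ : 0 < Δ) (hε : 0 ≤ ε)
    (hsens : ∀ (h : H) (X X' : Fin n → 𝒳),
      (Finset.univ.filter fun i => X i ≠ X' i).card ≤ 1 →
      |s X h - s X' h| ≤ Δ) :
    ∀ X X' : Fin n → 𝒳,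
      (Finset.univ.filter fun i => X i ≠ X' i).card ≤ 1 →
      ∀ S : Finset H,
        ∑ h ∈ S, expMechProb s Δ ε X h ≤
          Real.exp ε * ∑ h ∈ S, expMechProb s Δ ε X' h :=
  exponential_mechanism_is_DP_general n s Δ ε hΔ hε hsens
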